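/- In 𝔱_{1,n}, for any three pairwise distinct indices i, j, k in {1,…,n} and any integers α, β ≥ 0, one has [(ad x_i)^α(t_{ij}), (ad x_j)^β(t_{jk})] = −Σ_{γ=0}^{α} C(α,γ)·[(ad x_i)^γ(t_{ij}), (ad x_i)^{α+β−γ}(t_{ik})], where C(α,γ) is the binomial coefficient. -/

import Mathlib

/-! The elliptic braid Lie algebra `𝔱_{1,n}` presented by generators and relations. -/

noncomputable section

/-- Generators of `𝔱_{1,n}`: `x i`, `y i` for `i ∈ [n]` and `t i j` for `i ≠ j`. -/
inductive TGen (n : ℕ) : Type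
  | x : Fin n → TGen n
  | y : Fin n → TGen n
  | t : (i j : Fin n) → i ≠ j → TGen n

variable (k : Type) [Field k] [CharZero k] (n : ℕ)

/-- The free Lie algebra on the generators of `𝔱_{1,n}`. -/
abbrev FT : Type := FreeLieAlgebra k (TGen n)

/-- The generator `x i` in the free Lie algebra. -/
def fx (i : Fin n) : FT k n := FreeLieAlgebra.of k (TGen.x i)

/-- The generator `y i` in the free Lie algebra. -/
def fy (i : Fin n) : FT k n := FreeLieAlgebra.of k (TGen.y i)

/-- The generator `t i j` (for `i ≠ j`) in the free Lie algebra. -/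
def ft (i j : Fin n) (h : i ≠ j) : FT k n := FreeLieAlgebra.of k (TGen.t i j h)

/-- The defining relations of `𝔱_{1,n}`. -/
inductive TRel : FT k n → Prop
  | xx (i j : Fin n) : TRel ⁅fx k n i, fx k n j⁆
  | yy (i j : Fin n) : TRel ⁅fy k n i, fy k n j⁆
  | xy (i j : Fin n) (h : i ≠ j) : TRel (⁅fx k n i, fy k n j⁆ - ft k n i j h)
  | xyDiag (i : Fin n) :
      TRel (⁅fx k n i, fy k n i⁆ + ∑ j : Fin n, if h : i ≠ j then ft k n i j h else 0)
  | xt (i j l : Fin n) (h : i ≠ j) (h1 : l ≠ i) (h2 : l ≠ j) :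
      TRel ⁅fx k n l, ft k n i j h⁆
  | yt (i j l : Fin n) (h : i ≠ j) (h1 : l ≠ i) (h2 : l ≠ j) :
      TRel ⁅fy k n l, ft k n i j h⁆
  | xxt (i j : Fin n) (h : i ≠ j) : TRel ⁅fx k n i + fx k n j, ft k n i j h⁆
  | yyt (i j : Fin n) (h : i ≠ j) : TRel ⁅fy k n i + fy k n j, ft k n i j h⁆
  | tsymm (i j : Fin n) (h : i ≠ j) : TRel (ft k n i j h - ft k n j i h.symm)

/-- The Lie ideal of relations of `𝔱_{1,n}`. -/
abbrev tIdeal : LieIdeal k (FT k n) :=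
  LieSubmodule.lieSpan k (FT k n) {a | TRel k n a}

/-- The Lie algebra `𝔱_{1,n}`. -/
abbrev T1 : Type := FT k n ⧸ tIdeal k n

/-- The generator `x i` of `𝔱_{1,n}`. -/
def tx (i : Fin n) : T1 k n := LieSubmodule.Quotient.mk (N := tIdeal k n) (fx k n i)

/-- The generator `y i` of `𝔱_{1,n}`. -/
def ty (i : Fin n) : T1 k n := LieSubmodule.Quotient.mk (N := tIdeal k n) (fy k n i)

/-- The generator `t i j` (for `i ≠ j`) of `𝔱_{1,n}`. -/
def tt (i j : Fin n) (h : i ≠ j) : T1 k n :=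
  LieSubmodule.Quotient.mk (N := tIdeal k n) (ft k n i j h)

/-- The adjoint operator `ad x : 𝔱_{1,n} → 𝔱_{1,n}`. -/
def adT (v : T1 k n) : Module.End k (T1 k n) := LieAlgebra.ad k (T1 k n) v

/-! The derivation `S = ad (x_i + x_j) = ad x_i + ad x_j` kills `t_{ij}` and commutes with
`ad x_i`. As `ad x_i` kills `t_{jl}`, one has `(ad x_j)^β t_{jl} = S^β t_{jl}`, and both powers
move off the bracket: `[(ad x_i)^α t_{ij}, S^β t_{jl}] = S^β (ad x_i)^α [t_{ij}, t_{jl}]`.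
The Jacobi identity with `[x_i + x_j, y_l] = t_{il} + t_{jl}` gives
`[t_{ij}, t_{jl}] = -[t_{ij}, t_{il}]`. Expanding `(ad x_i)^α` by the Leibniz rule, it remains
to note that `S` acts as `ad x_i` on `(ad x_i)^m t_{il}`, because `ad x_j` kills `t_{il}`. -/

section EndPow

variable {R M : Type*} [Semiring R] [AddCommMonoid M] [Module R M]

theorem Commute.apply_pow_apply_eq_zero {f g : Module.End R M} (h : Commute f g)
    {v : M} (hv : g v = 0) (m : ℕ) : g ((f ^ m) v) = 0 := by
  rw [← Module.End.mul_apply, ← (h.pow_left m).eq, Module.End.mul_apply, hv, map_zero]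

theorem Commute.add_pow_apply_of_apply_eq_zero {f g : Module.End R M} (h : Commute f g)
    {v : M} (hv : f v = 0) (m : ℕ) : ((f + g) ^ m) v = (g ^ m) v := by
  induction m with
  | zero => rfl
  | succ m ih =>
    rw [pow_succ', Module.End.mul_apply, ih, LinearMap.add_apply,
      h.symm.apply_pow_apply_eq_zero hv, zero_add, pow_succ', Module.End.mul_apply]

end EndPow

namespace LieAlgebra

variable {R L : Type*} [CommRing R] [LieRing L] [LieAlgebra R L]

theorem commute_ad_of_lie_eq_zero {x y : L} (h : ⁅x, y⁆ = 0) :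
    Commute (ad R L x) (ad R L y) := by
  ext u
  simp only [Module.End.mul_apply, ad_apply]
  rw [leibniz_lie, h, zero_lie, zero_add]

theorem ad_pow_lie_of_lie_eq_zero_left {x y : L} (h : ⁅x, y⁆ = 0) (z : L) (m : ℕ) :
    ((ad R L x) ^ m) ⁅y, z⁆ = ⁅y, ((ad R L x) ^ m) z⁆ := by
  induction m with
  | zero => rfl
  | succ m ih =>
    rw [pow_succ', Module.End.mul_apply, ih, ad_lie, ad_apply, h, zero_lie, zero_add]
    rfl

theorem ad_pow_lie_of_lie_eq_zero_right {x z : L} (h : ⁅x, z⁆ = 0) (y : L) (m : ℕ) :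
    ((ad R L x) ^ m) ⁅y, z⁆ = ⁅((ad R L x) ^ m) y, z⁆ := by
  rw [← lie_skew, map_neg, ad_pow_lie_of_lie_eq_zero_left h, lie_skew]

theorem ad_pow_lie_eq_sum_range (x y z : L) (m : ℕ) :
    ((ad R L x) ^ m) ⁅y, z⁆ = ∑ γ ∈ Finset.range (m + 1),
      (m.choose γ : R) • ⁅((ad R L x) ^ γ) y, ((ad R L x) ^ (m - γ)) z⁆ := by
  simp only [Nat.cast_smul_eq_nsmul]
  rw [ad_pow_lie, Finset.Nat.sum_antidiagonal_eq_sum_range_succ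
    (fun a b => m.choose a • ⁅((ad R L x) ^ a) y, ((ad R L x) ^ b) z⁆)]

end LieAlgebra

section Relations

variable {k n}

set_option linter.unusedSectionVars false

theorem mk_eq_zero_of_rel {a : FT k n} (h : TRel k n a) :
    (LieSubmodule.Quotient.mk (N := tIdeal k n) a : T1 k n) = 0 :=
  LieSubmodule.Quotient.mk_eq_zero'.mpr (LieSubmodule.subset_lieSpan h)

theorem tx_lie_tx (i j : Fin n) : ⁅tx k n i, tx k n j⁆ = 0 :=
  mk_eq_zero_of_rel (TRel.xx i j)

theorem tx_lie_tt_of_ne {i j m : Fin n} (h : i ≠ j) (hi : m ≠ i) (hj : m ≠ j) :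
    ⁅tx k n m, tt k n i j h⁆ = 0 :=
  mk_eq_zero_of_rel (TRel.xt i j m h hi hj)

theorem ty_lie_tt_of_ne {i j m : Fin n} (h : i ≠ j) (hi : m ≠ i) (hj : m ≠ j) :
    ⁅ty k n m, tt k n i j h⁆ = 0 :=
  mk_eq_zero_of_rel (TRel.yt i j m h hi hj)

theorem tx_lie_ty {i j : Fin n} (h : i ≠ j) : ⁅tx k n i, ty k n j⁆ = tt k n i j h :=
  sub_eq_zero.mp (mk_eq_zero_of_rel (TRel.xy i j h))

theorem tx_add_tx_lie_tt {i j : Fin n} (h : i ≠ j) :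
    ⁅tx k n i + tx k n j, tt k n i j h⁆ = 0 :=
  mk_eq_zero_of_rel (TRel.xxt i j h)

theorem tt_lie_tt {i j l : Fin n} (hij : i ≠ j) (hil : i ≠ l) (hjl : j ≠ l) :
    ⁅tt k n i j hij, tt k n j l hjl⁆ = -⁅tt k n i j hij, tt k n i l hil⁆ := by
  have hsy : ⁅tx k n i + tx k n j, ty k n l⁆ = tt k n i l hil + tt k n j l hjl := by
    rw [add_lie, tx_lie_ty, tx_lie_ty]
  have hts : ⁅tt k n i j hij, tx k n i + tx k n j⁆ = 0 := by
    rw [← lie_skew, tx_add_tx_lie_tt, neg_zero]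
  have hty : ⁅tt k n i j hij, ty k n l⁆ = 0 := by
    rw [← lie_skew, ty_lie_tt_of_ne hij hil.symm hjl.symm, neg_zero]
  have hsum : ⁅tt k n i j hij, tt k n i l hil + tt k n j l hjl⁆ = 0 := by
    rw [← hsy, leibniz_lie, hts, hty, zero_lie, lie_zero, add_zero]
  rw [lie_add, add_eq_zero_iff_neg_eq] at hsum
  exact hsum.symm

end Relations

/-- in `𝔱_{1,n}`, for pairwise distinct `i, j, l` and `α, β ≥ 0`,
`[(ad x_i)^α(t_{ij}), (ad x_j)^β(t_{jl})]
  = −Σ_{γ=0}^{α} C(α,γ)·[(ad x_i)^γ(t_{ij}), (ad x_i)^{α+β−γ}(t_{il})]`. -/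
theorem statement16 (i j l : Fin n)
    (hij : i ≠ j) (hil : i ≠ l) (hjl : j ≠ l) (α β : ℕ) :
    ⁅((adT k n (tx k n i)) ^ α) (tt k n i j hij),
      ((adT k n (tx k n j)) ^ β) (tt k n j l hjl)⁆ =
    -∑ γ ∈ Finset.range (α + 1), (Nat.choose α γ : k) •
        ⁅((adT k n (tx k n i)) ^ γ) (tt k n i j hij),
          ((adT k n (tx k n i)) ^ (α + β - γ)) (tt k n i l hil)⁆ := by
  unfold adT
  open LieAlgebra in
  set X := ad k (T1 k n) (tx k n i)
  set Y := ad k (T1 k n) (tx k n j)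
  set S := ad k (T1 k n) (tx k n i + tx k n j)
  have hS : S = X + Y := map_add _ _ _
  have hXY : Commute X Y := commute_ad_of_lie_eq_zero (tx_lie_tx i j)
  have hSX : Commute S X := hS ▸ (Commute.refl X).add_left hXY.symm
  have hX_tjl : ⁅tx k n i, tt k n j l hjl⁆ = 0 := tx_lie_tt_of_ne hjl hij hil
  have hY_til : Y (tt k n i l hil) = 0 := tx_lie_tt_of_ne hil hij.symm hjl
  have hS_tij : S (tt k n i j hij) = 0 := tx_add_tx_lie_tt hij
  have hY_pow : (Y ^ β) (tt k n j l hjl) = (S ^ β) (tt k n j l hjl) := by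
    rw [hS, hXY.add_pow_apply_of_apply_eq_zero hX_tjl]
  have hS_pow (m : ℕ) :
      (S ^ β) ((X ^ m) (tt k n i l hil)) = (X ^ (m + β)) (tt k n i l hil) := by
    have hY_Xm : Y ((X ^ m) (tt k n i l hil)) = 0 := hXY.apply_pow_apply_eq_zero hY_til m
    rw [hS, add_comm, hXY.symm.add_pow_apply_of_apply_eq_zero hY_Xm, ← Module.End.mul_apply,
      ← pow_add, add_comm]
  rw [hY_pow, ← ad_pow_lie_of_lie_eq_zero_left (hSX.symm.apply_pow_apply_eq_zero hS_tij α),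
    ← ad_pow_lie_of_lie_eq_zero_right hX_tjl, tt_lie_tt hij hil hjl, map_neg, map_neg,
    ad_pow_lie_eq_sum_range, map_sum]
  refine congrArg Neg.neg (Finset.sum_congr rfl fun γ hγ => ?_)
  rw [map_smul, ad_pow_lie_of_lie_eq_zero_left (hSX.symm.apply_pow_apply_eq_zero hS_tij γ),
    hS_pow, Nat.sub_add_comm (Nat.lt_succ_iff.mp (Finset.mem_range.mp hγ))]
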